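/- Let φ : ℝ → ℝ be a C² function with bounded second derivative such that φ(0) = 0 and φ'(0) = 0. Let ζ : ℝ → ℝ be an infinitely differentiable nondecreasing function with ζ(y) = 0 for y ≤ 1 and ζ(y) = 1 for y ≥ 2, and for m ≥ 1 define ψ_m(y) = φ(y) ζ(my). Then (ψ_m) converges uniformly on ℝ to the function y ↦ φ(y⁺); for every y ∈ ℝ, ψ_m'(y) → φ'(y⁺) as m → ∞; and for every y ∈ ℝ, ψ_m''(y) → 𝟙_{{y>0}} φ''(y) as m → ∞, where 𝟙_{{y>0}} equals 1 if y > 0 and 0 otherwise. -/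

import Mathlib

open Filter Topology Set

/-!
For every `y`, once `m` is large the function `ψ_m` agrees near `y` with `φ` (if `y > 0`) or
with `0` (if `y ≤ 0`), so all its derivatives at `y` are eventually constant. Uniformly,
`ψ_m(y)` differs from `φ(y⁺)` only for `0 < y < 2 / m`, where `|φ y| ≤ M y² ≤ 4 M / m²`
by Taylor's bound with `φ 0 = φ' 0 = 0`.
-/

theorem abs_le_mul_sq_of_abs_iteratedDeriv_two_le {f : ℝ → ℝ} {M y : ℝ} (hf : ContDiff ℝ 2 f)
    (hM : ∀ t, |iteratedDeriv 2 f t| ≤ M) (h0 : f 0 = 0) (h0' : deriv f 0 = 0) (hy : 0 ≤ y) :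
    |f y| ≤ M * y ^ 2 := by
  have hM0 : 0 ≤ M := (abs_nonneg _).trans (hM 0)
  have hM' : ∀ t, ‖deriv (deriv f) t‖ ≤ M := by
    simpa [iteratedDeriv_succ, iteratedDeriv_one] using hM
  have hf' : Differentiable ℝ (deriv f) := by
    simpa using hf.differentiable_iteratedDeriv 1 (by norm_num)
  have hderiv : ∀ t ∈ Icc 0 y, ‖deriv f t‖ ≤ M * y := by
    intro t ht
    have h := norm_image_sub_le_of_norm_deriv_le_segment'
      (fun z _ => (hf' z).hasDerivAt.hasDerivWithinAt) (fun z _ => hM' z) t ht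
    rw [h0', sub_zero, sub_zero] at h
    exact h.trans (mul_le_mul_of_nonneg_left ht.2 hM0)
  have h := norm_image_sub_le_of_norm_deriv_le_segment'
    (fun z _ => ((hf.differentiable (by norm_num)) z).hasDerivAt.hasDerivWithinAt)
    (fun z hz => hderiv z (Ico_subset_Icc_self hz)) y ⟨hy, le_rfl⟩
  rw [h0, sub_zero, sub_zero, Real.norm_eq_abs] at h
  linarith

theorem tendsto_iteratedDeriv_of_eventually_eventuallyEq {𝕜 E ι : Type*}
    [NontriviallyNormedField 𝕜] [NormedAddCommGroup E] [NormedSpace 𝕜 E] {l : Filter ι}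
    {F : ι → 𝕜 → E} {g : 𝕜 → E} {y : 𝕜} (n : ℕ) (h : ∀ᶠ i in l, F i =ᶠ[𝓝 y] g) :
    Tendsto (fun i => iteratedDeriv n (F i) y) l (𝓝 (iteratedDeriv n g y)) :=
  tendsto_const_nhds.congr' (h.mono fun _ hi => (hi.iteratedDeriv_eq n).symm)

section Cutoff

variable {f ζ : ℝ → ℝ}

theorem cutoff_mem_Icc (hmono : Monotone ζ) (hζ0 : ∀ y : ℝ, y ≤ 1 → ζ y = 0)
    (hζ1 : ∀ y : ℝ, 2 ≤ y → ζ y = 1) (t : ℝ) : ζ t ∈ Icc 0 1 :=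
  ⟨hζ0 _ (min_le_right t 1) ▸ hmono (min_le_left t 1),
    hζ1 _ (le_max_right t 2) ▸ hmono (le_max_left t 2)⟩

theorem mul_cutoff_comp_eventuallyEq_zero (hζ0 : ∀ y : ℝ, y ≤ 1 → ζ y = 0) {m y : ℝ}
    (hy : m * y < 1) : (fun z => f z * ζ (m * z)) =ᶠ[𝓝 y] 0 := by
  filter_upwards [((continuous_const_mul m).tendsto y).eventually (gt_mem_nhds hy)] with z hz
  rw [hζ0 _ hz.le, mul_zero, Pi.zero_apply]

theorem mul_cutoff_comp_eventuallyEq_self (hζ1 : ∀ y : ℝ, 2 ≤ y → ζ y = 1) {m y : ℝ}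
    (hy : 2 < m * y) : (fun z => f z * ζ (m * z)) =ᶠ[𝓝 y] f := by
  filter_upwards [((continuous_const_mul m).tendsto y).eventually (lt_mem_nhds hy)] with z hz
  rw [hζ1 _ hz.le, mul_one]

theorem eventually_mul_cutoff_comp_eventuallyEq (hζ0 : ∀ y : ℝ, y ≤ 1 → ζ y = 0)
    (hζ1 : ∀ y : ℝ, 2 ≤ y → ζ y = 1) (y : ℝ) :
    ∀ᶠ m : ℕ in atTop, (fun z => f z * ζ (m * z)) =ᶠ[𝓝 y] if 0 < y then f else 0 := by
  by_cases hy : 0 < y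
  · filter_upwards [tendsto_natCast_atTop_atTop.eventually_gt_atTop (2 / y)] with m hm
    rw [if_pos hy]
    exact mul_cutoff_comp_eventuallyEq_self hζ1 ((div_lt_iff₀ hy).1 hm)
  · refine Eventually.of_forall fun m => ?_
    rw [if_neg hy]
    exact mul_cutoff_comp_eventuallyEq_zero hζ0
      ((mul_nonpos_of_nonneg_of_nonpos m.cast_nonneg (not_lt.1 hy)).trans_lt one_pos)

theorem dist_max_zero_mul_cutoff_comp_le (hmono : Monotone ζ)
    (hζ0 : ∀ y : ℝ, y ≤ 1 → ζ y = 0) (hζ1 : ∀ y : ℝ, 2 ≤ y → ζ y = 1) {M m : ℝ}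
    (hf : ∀ y, 0 ≤ y → |f y| ≤ M * y ^ 2) (hf0 : f 0 = 0) (hm : 0 < m) (y : ℝ) :
    dist (f (max y 0)) (f y * ζ (m * y)) ≤ M * (2 / m) ^ 2 := by
  have hM0 : 0 ≤ M := by simpa using (abs_nonneg _).trans (hf 1 zero_le_one)
  rcases le_or_gt y 0 with hy | hy
  · rw [hζ0 _ ((mul_nonpos_of_nonneg_of_nonpos hm.le hy).trans zero_le_one), max_eq_right hy,
      hf0, mul_zero, dist_self]
    positivity
  rw [max_eq_left hy.le]
  rcases le_or_gt 2 (m * y) with hmy | hmy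
  · rw [hζ1 _ hmy, mul_one, dist_self]
    positivity
  have hζy := cutoff_mem_Icc hmono hζ0 hζ1 (m * y)
  have hy2 : y ≤ 2 / m := by rw [le_div_iff₀ hm]; linarith
  calc dist (f y) (f y * ζ (m * y)) = |f y| * |1 - ζ (m * y)| := by
        rw [Real.dist_eq, ← abs_mul]; ring_nf
    _ ≤ M * y ^ 2 * 1 := by
        gcongr
        · exact hf y hy.le
        · rw [abs_le]; constructor <;> linarith [hζy.1, hζy.2]
    _ ≤ M * (2 / m) ^ 2 := by rw [mul_one]; gcongr

end Cutoff

theorem psi_m_phi_tendsto_general (φ : ℝ → ℝ) (hφ : ContDiff ℝ 2 φ)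
    (M : ℝ) (hM : ∀ y : ℝ, |iteratedDeriv 2 φ y| ≤ M)
    (hφ0 : φ 0 = 0) (hφ'0 : deriv φ 0 = 0)
    (ζ : ℝ → ℝ) (hζmono : Monotone ζ)
    (hζ0 : ∀ y : ℝ, y ≤ 1 → ζ y = 0) (hζ1 : ∀ y : ℝ, 2 ≤ y → ζ y = 1) :
    TendstoUniformly (fun (m : ℕ) (y : ℝ) => φ y * ζ (m * y))
      (fun y => φ (max y 0)) atTop ∧
    (∀ y : ℝ, Tendsto (fun m : ℕ => deriv (fun z => φ z * ζ (m * z)) y) atTop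
      (nhds (deriv φ (max y 0)))) ∧
    (∀ y : ℝ, Tendsto (fun m : ℕ => iteratedDeriv 2 (fun z => φ z * ζ (m * z)) y) atTop
      (nhds ((if 0 < y then (1 : ℝ) else 0) * iteratedDeriv 2 φ y))) := by
  refine ⟨?_, fun y => ?_, fun y => ?_⟩
  · have hbound : Tendsto (fun m : ℕ => M * (2 / (m : ℝ)) ^ 2) atTop (𝓝 0) := by
      simpa using ((tendsto_const_div_atTop_nhds_zero_nat 2).pow 2).const_mul M
    rw [Metric.tendstoUniformly_iff]
    intro ε hε
    filter_upwards [hbound.eventually_lt_const hε, eventually_gt_atTop 0] with m hm hm0 y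
    exact (dist_max_zero_mul_cutoff_comp_le hζmono hζ0 hζ1
      (fun y hy => abs_le_mul_sq_of_abs_iteratedDeriv_two_le hφ hM hφ0 hφ'0 hy) hφ0
      (Nat.cast_pos.2 hm0) y).trans_lt hm
  · have h := tendsto_iteratedDeriv_of_eventually_eventuallyEq 1
      (eventually_mul_cutoff_comp_eventuallyEq (f := φ) hζ0 hζ1 y)
    simp only [iteratedDeriv_one] at h
    split_ifs at h with hy
    · rwa [max_eq_left hy.le]
    · rw [max_eq_right (not_lt.1 hy), hφ'0]
      simpa [Pi.zero_def] using h
  · have h := tendsto_iteratedDeriv_of_eventually_eventuallyEq 2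
      (eventually_mul_cutoff_comp_eventuallyEq (f := φ) hζ0 hζ1 y)
    split_ifs at h ⊢
    · rwa [one_mul]
    · simpa using h

/-- Let `φ` be `C²` with bounded second derivative, `φ(0) = 0`, `φ'(0) = 0`, and let `ζ` be a
smooth nondecreasing cutoff (`ζ = 0` on `(-∞,1]`, `ζ = 1` on `[2,∞)`). Then
`ψ_m(y) = φ(y) ζ(my)` converges uniformly to `y ↦ φ(y⁺)`, `ψ_m'(y) → φ'(y⁺)` pointwise,
and `ψ_m''(y) → 𝟙_{y>0} φ''(y)` pointwise. -/
theorem psi_m_phi_tendsto (φ : ℝ → ℝ) (hφ : ContDiff ℝ 2 φ)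
    (M : ℝ) (hM : ∀ y : ℝ, |iteratedDeriv 2 φ y| ≤ M)
    (hφ0 : φ 0 = 0) (hφ'0 : deriv φ 0 = 0)
    (ζ : ℝ → ℝ) (hζ : ContDiff ℝ (⊤ : ℕ∞) ζ) (hζmono : Monotone ζ)
    (hζ0 : ∀ y : ℝ, y ≤ 1 → ζ y = 0) (hζ1 : ∀ y : ℝ, 2 ≤ y → ζ y = 1) :
    TendstoUniformly (fun (m : ℕ) (y : ℝ) => φ y * ζ (m * y))
      (fun y => φ (max y 0)) atTop ∧
    (∀ y : ℝ, Tendsto (fun m : ℕ => deriv (fun z => φ z * ζ (m * z)) y) atTop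
      (nhds (deriv φ (max y 0)))) ∧
    (∀ y : ℝ, Tendsto (fun m : ℕ => iteratedDeriv 2 (fun z => φ z * ζ (m * z)) y) atTop
      (nhds ((if 0 < y then (1 : ℝ) else 0) * iteratedDeriv 2 φ y))) :=
  psi_m_phi_tendsto_general φ hφ M hM hφ0 hφ'0 ζ hζmono hζ0 hζ1
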